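/- The η-transform of the Marchenko–Pastur distribution satisfies, for all γ > 0 and r > 0: ∫ 1/(1 + γx) dMP_r(x) = 1 − F(γ,r)/(4rγ). -/

import Mathlib

open MeasureTheory
open scoped ENNReal

/- The Marchenko–Pastur distribution with shape parameter `r`: the measure
`max(1 − 1/r, 0)·δ₀` plus the absolutely continuous part with Lebesgue density
`x ↦ √(max(x−a,0)·max(b−x,0))/(2πrx)`, where `a = (1−√r)²`, `b = (1+√r)²`. -/
noncomputable def MP (r : ℝ) : Measure ℝ :=
  ENNReal.ofReal (max (1 - 1 / r) 0) • Measure.dirac (0 : ℝ) +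
    volume.withDensity fun x =>
      ENNReal.ofReal (Real.sqrt (max (x - (1 - Real.sqrt r) ^ 2) 0 *
          max ((1 + Real.sqrt r) ^ 2 - x) 0) / (2 * Real.pi * r * x))

/- `F(γ,r) = (√(γ(1+√r)² + 1) − √(γ(1−√r)² + 1))²`. -/
noncomputable def Fmp (γ r : ℝ) : ℝ :=
  (Real.sqrt (γ * (1 + Real.sqrt r) ^ 2 + 1) - Real.sqrt (γ * (1 - Real.sqrt r) ^ 2 + 1)) ^ 2

/- η-transform of the Marchenko–Pastur distribution:
∫ 1/(1+γx) dMP_r(x) = 1 − F(γ,r)/(4rγ) for all γ > 0, r > 0. -/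

lemma key_deriv (a b c x : ℝ) (hab : a < b) (hac : 0 < a + c) (hx : x ∈ Set.Ioo a b) :
    HasDerivAt (fun y : ℝ => Real.sqrt ((y - a) * (b - y))
        + ((a + b) / 2 + c) * Real.arcsin ((2 * y - a - b) / (b - a))
        + Real.sqrt ((a + c) * (b + c)) *
            Real.arcsin ((2 * ((a + c) * (b + c)) - (a + b + 2 * c) * (y + c)) / ((b - a) * (y + c))))
      (Real.sqrt ((x - a) * (b - x)) / (x + c)) x := by
  obtain ⟨hxa, hxb⟩ := hx
  have hD : (0:ℝ) < b - a := by linarith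
  have hu : (0:ℝ) < x + c := by linarith
  have hbc : (0:ℝ) < b + c := by linarith
  have hS2 : Real.sqrt ((x - a) * (b - x)) ^ 2 = (x - a) * (b - x) :=
    Real.sq_sqrt (by nlinarith)
  have hSpos : 0 < Real.sqrt ((x - a) * (b - x)) := Real.sqrt_pos.2 (by nlinarith)
  set S := Real.sqrt ((x - a) * (b - x)) with hSdef
  set k := Real.sqrt ((a + c) * (b + c)) with hkdef
  have hk2 : k ^ 2 = (a + c) * (b + c) := Real.sq_sqrt (by positivity)
  have hkpos : 0 < k := Real.sqrt_pos.2 (by positivity)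
  -- term 1
  have h1 : HasDerivAt (fun y : ℝ => Real.sqrt ((y - a) * (b - y)))
      ((a + b - 2 * x) / (2 * S)) x := by
    have hp : HasDerivAt (fun y : ℝ => (y - a) * (b - y)) (a + b - 2 * x) x := by
      have h := ((hasDerivAt_id x).sub_const a).mul ((hasDerivAt_const x b).sub (hasDerivAt_id x))
      simp only [id_eq] at h
      refine h.congr_deriv ?_; simp only [Pi.sub_apply, id_eq]; ring
    exact hp.sqrt (by nlinarith)
  -- term 2
  have h2 : HasDerivAt (fun y : ℝ => Real.arcsin ((2 * y - a - b) / (b - a))) (1 / S) x := by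
    have hL : HasDerivAt (fun y : ℝ => (2 * y - a - b) / (b - a)) (2 / (b - a)) x := by
      have h := (((hasDerivAt_id x).const_mul 2).sub_const (a + b)).div_const (b - a)
      simp only [id_eq, mul_one] at h
      convert h using 2
      · rfl
      · rfl
      · ring
    have harg1 : (2 * x - a - b) / (b - a) ≠ -1 := by
      intro h; rw [div_eq_iff hD.ne'] at h; nlinarith
    have harg2 : (2 * x - a - b) / (b - a) ≠ 1 := by
      intro h; rw [div_eq_iff hD.ne'] at h; nlinarith
    have h := (Real.hasDerivAt_arcsin harg1 harg2).comp x hL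
    refine h.congr_deriv (Eq.symm ?_)
    have hin : 1 - ((2 * x - a - b) / (b - a)) ^ 2 = (2 * S / (b - a)) ^ 2 := by
      rw [div_pow, div_pow, mul_pow, hS2]
      field_simp
      ring
    rw [hin, Real.sqrt_sq (by positivity)]
    field_simp
  -- term 3
  have h3 : HasDerivAt (fun y : ℝ =>
      Real.arcsin ((2 * ((a + c) * (b + c)) - (a + b + 2 * c) * (y + c)) / ((b - a) * (y + c))))
      (-(k ^ 2) / (k * ((x + c) * S))) x := by
    have hψ : HasDerivAt (fun y : ℝ =>
        (2 * ((a + c) * (b + c)) - (a + b + 2 * c) * (y + c)) / ((b - a) * (y + c)))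
        (-(2 * ((a + c) * (b + c))) / ((b - a) * (x + c) ^ 2) ) x := by
      have hnum : HasDerivAt (fun y : ℝ => 2 * ((a + c) * (b + c)) - (a + b + 2 * c) * (y + c))
          (-(a + b + 2 * c)) x := by
        have h := (((hasDerivAt_id x).add_const c).const_mul (a + b + 2 * c)).const_sub
          (2 * ((a + c) * (b + c)))
        simp only [id_eq, mul_one] at h
        exact h
      have hden : HasDerivAt (fun y : ℝ => (b - a) * (y + c)) (b - a) x := by
        have h := ((hasDerivAt_id x).add_const c).const_mul (b - a)
        simp only [id_eq, mul_one] at h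
        exact h
      have h := hnum.div hden (by positivity)
      refine h.congr_deriv (Eq.symm ?_)
      field_simp
      ring
    have hψx1 : (2 * ((a + c) * (b + c)) - (a + b + 2 * c) * (x + c)) / ((b - a) * (x + c)) ≠ -1 := by
      intro h; rw [div_eq_iff (by positivity : ((b - a) * (x + c)) ≠ 0)] at h; nlinarith
    have hψx2 : (2 * ((a + c) * (b + c)) - (a + b + 2 * c) * (x + c)) / ((b - a) * (x + c)) ≠ 1 := by
      intro h; rw [div_eq_iff (by positivity : ((b - a) * (x + c)) ≠ 0)] at h; nlinarith
    have h := (Real.hasDerivAt_arcsin hψx1 hψx2).comp x hψ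
    refine h.congr_deriv (Eq.symm ?_)
    have hin : 1 - ((2 * ((a + c) * (b + c)) - (a + b + 2 * c) * (x + c)) / ((b - a) * (x + c))) ^ 2
        = (2 * k * S / ((b - a) * (x + c))) ^ 2 := by
      have hM : ((b - a) * (x + c)) ≠ 0 := by positivity
      rw [div_pow, div_pow, eq_div_iff (pow_ne_zero 2 hM), sub_mul, one_mul,
        div_mul_cancel₀ _ (pow_ne_zero 2 hM)]
      linear_combination (-4 * ((x - a) * (b - x))) * hk2 + (-4 * k ^ 2) * hS2
    rw [hin, Real.sqrt_sq (by positivity), ← hk2]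
    field_simp
  have h := (h1.add (h2.const_mul ((a + b) / 2 + c))).add (h3.const_mul k)
  refine h.congr_deriv (Eq.symm ?_)
  have e : k * (-(k ^ 2) / (k * ((x + c) * S))) = -(k ^ 2) / ((x + c) * S) := by
    field_simp
  rw [e]
  have hrhs : (a + b - 2 * x) / (2 * S) + ((a + b) / 2 + c) * (1 / S) + -(k ^ 2) / ((x + c) * S)
      = ((a + b - 2 * x) * (x + c) + (a + b + 2 * c) * (x + c) - 2 * k ^ 2) / (2 * S * (x + c)) := by
    field_simp
    ring
  rw [hrhs, div_eq_div_iff hu.ne' (by positivity)]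
  linear_combination (2 * (x + c)) * hS2 + (2 * (x + c)) * hk2

lemma key_integral (a b c : ℝ) (hab : a < b) (hac : 0 < a + c) :
    ∫ x in a..b, Real.sqrt ((x - a) * (b - x)) / (x + c)
      = Real.pi * ((a + b) / 2 + c - Real.sqrt ((a + c) * (b + c))) := by
  have hD : (0:ℝ) < b - a := by linarith
  have hbc : (0:ℝ) < b + c := by linarith
  have hcont : ContinuousOn (fun y : ℝ => Real.sqrt ((y - a) * (b - y))
      + ((a + b) / 2 + c) * Real.arcsin ((2 * y - a - b) / (b - a))
      + Real.sqrt ((a + c) * (b + c)) *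
          Real.arcsin ((2 * ((a + c) * (b + c)) - (a + b + 2 * c) * (y + c)) / ((b - a) * (y + c))))
      (Set.Icc a b) := by
    apply ContinuousOn.add
    apply ContinuousOn.add
    · exact (Real.continuous_sqrt.comp (by continuity)).continuousOn
    · exact continuousOn_const.mul (Real.continuous_arcsin.comp (by continuity)).continuousOn
    · apply continuousOn_const.mul
      apply Real.continuous_arcsin.comp_continuousOn
      apply ContinuousOn.div
        ((by continuity : Continuous fun y : ℝ => 2 * ((a + c) * (b + c)) - (a + b + 2 * c) * (y + c)).continuousOn)
        ((by continuity : Continuous fun y : ℝ => (b - a) * (y + c)).continuousOn)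
      intro y hy
      have : 0 < y + c := by have := hy.1; linarith
      positivity
  have hint : IntervalIntegrable (fun x : ℝ => Real.sqrt ((x - a) * (b - x)) / (x + c))
      volume a b := by
    apply ContinuousOn.intervalIntegrable
    rw [Set.uIcc_of_le hab.le]
    apply ContinuousOn.div (Real.continuous_sqrt.comp (by continuity)).continuousOn
      ((by continuity : Continuous fun y : ℝ => y + c).continuousOn)
    intro y hy
    have : 0 < y + c := by have := hy.1; linarith
    positivity
  have hftc := intervalIntegral.integral_eq_sub_of_hasDeriv_right_of_le hab.le hcont
    (fun x hx => (key_deriv a b c x hab hac hx).hasDerivWithinAt) hint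
  rw [hftc]
  have e1 : (2 * b - a - b) / (b - a) = 1 := by
    rw [div_eq_one_iff_eq hD.ne']; ring
  have e2 : (2 * ((a + c) * (b + c)) - (a + b + 2 * c) * (b + c)) / ((b - a) * (b + c)) = -1 := by
    rw [div_eq_iff (by positivity : ((b - a) * (b + c)) ≠ 0)]; ring
  have e3 : (2 * a - a - b) / (b - a) = -1 := by
    rw [div_eq_iff hD.ne']; ring
  have e4 : (2 * ((a + c) * (b + c)) - (a + b + 2 * c) * (a + c)) / ((b - a) * (a + c)) = 1 := by
    rw [div_eq_one_iff_eq (by positivity : ((b - a) * (a + c)) ≠ 0)]; ring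
  simp only [sub_self, mul_zero, zero_mul, Real.sqrt_zero, e1, e2, e3, e4,
    Real.arcsin_one, Real.arcsin_neg_one]
  ring

lemma sqrt_int0 (b : ℝ) (hb : 0 < b) :
    IntervalIntegrable (fun x : ℝ => Real.sqrt ((x - 0) * (b - x)) / x) volume 0 b := by
  rw [intervalIntegrable_iff_integrableOn_Ioc_of_le hb.le]
  have hg : IntegrableOn (fun x : ℝ => Real.sqrt b * x ^ (-(1:ℝ)/2)) (Set.Ioc 0 b) volume := by
    have h := (intervalIntegral.intervalIntegrable_rpow' (a := 0) (b := b)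
      (r := -(1:ℝ)/2) (by norm_num)).const_mul (Real.sqrt b)
    rwa [intervalIntegrable_iff_integrableOn_Ioc_of_le hb.le] at h
  apply Integrable.mono' hg
  · apply ContinuousOn.aestronglyMeasurable _ measurableSet_Ioc
    apply ContinuousOn.div (Real.continuous_sqrt.comp (by continuity)).continuousOn
      continuousOn_id
    intro y hy; exact ne_of_gt hy.1
  · rw [ae_restrict_iff' measurableSet_Ioc]
    filter_upwards with x hx
    obtain ⟨hx0, hxb⟩ := hx
    have hsx : 0 < Real.sqrt x := Real.sqrt_pos.2 hx0
    have h2 : x ^ (-(1:ℝ)/2) = (Real.sqrt x)⁻¹ := by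
      rw [show (-(1:ℝ)/2) = -(1/2:ℝ) by norm_num, Real.rpow_neg hx0.le, ← Real.sqrt_eq_rpow]
    rw [Real.norm_eq_abs, abs_div, abs_of_nonneg (Real.sqrt_nonneg _), abs_of_pos hx0, h2]
    have h1 : Real.sqrt ((x - 0) * (b - x)) ≤ Real.sqrt x * Real.sqrt b := by
      rw [← Real.sqrt_mul hx0.le]
      apply Real.sqrt_le_sqrt
      nlinarith
    calc Real.sqrt ((x - 0) * (b - x)) / x ≤ Real.sqrt x * Real.sqrt b / x := by gcongr
      _ = Real.sqrt b * (Real.sqrt x)⁻¹ := by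
          field_simp
          linear_combination Real.mul_self_sqrt hx0.le

lemma key_integral0 (b : ℝ) (hb : 0 < b) :
    ∫ x in (0:ℝ)..b, Real.sqrt ((x - 0) * (b - x)) / x = Real.pi * (b / 2) := by
  have hcont : ContinuousOn (fun y : ℝ => Real.sqrt ((y - 0) * (b - y))
      + (b / 2) * Real.arcsin ((2 * y - 0 - b) / (b - 0))) (Set.Icc 0 b) :=
    ((Real.continuous_sqrt.comp (by continuity)).add
      (continuous_const.mul (Real.continuous_arcsin.comp (by continuity)))).continuousOn
  have hderiv : ∀ x ∈ Set.Ioo 0 b, HasDerivAt (fun y : ℝ => Real.sqrt ((y - 0) * (b - y))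
      + (b / 2) * Real.arcsin ((2 * y - 0 - b) / (b - 0)))
      (Real.sqrt ((x - 0) * (b - x)) / x) x := by
    intro x hx
    obtain ⟨hx0, hxb⟩ := hx
    have hS2 : Real.sqrt ((x - 0) * (b - x)) ^ 2 = (x - 0) * (b - x) :=
      Real.sq_sqrt (by nlinarith)
    have hSpos : 0 < Real.sqrt ((x - 0) * (b - x)) := Real.sqrt_pos.2 (by nlinarith)
    set S := Real.sqrt ((x - 0) * (b - x)) with hSdef
    have h1 : HasDerivAt (fun y : ℝ => Real.sqrt ((y - 0) * (b - y)))
        ((0 + b - 2 * x) / (2 * S)) x := by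
      have hp : HasDerivAt (fun y : ℝ => (y - 0) * (b - y)) (0 + b - 2 * x) x := by
        have h := ((hasDerivAt_id x).sub_const 0).mul ((hasDerivAt_const x b).sub (hasDerivAt_id x))
        simp only [id_eq] at h
        refine h.congr_deriv ?_; simp only [Pi.sub_apply, id_eq]; ring
      exact hp.sqrt (by nlinarith)
    have h2 : HasDerivAt (fun y : ℝ => Real.arcsin ((2 * y - 0 - b) / (b - 0))) (1 / S) x := by
      have hL : HasDerivAt (fun y : ℝ => (2 * y - 0 - b) / (b - 0)) (2 / (b - 0)) x := by
        have h := (((hasDerivAt_id x).const_mul 2).sub_const (0 + b)).div_const (b - 0)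
        simp only [id_eq, mul_one] at h
        convert h using 2
        · rfl
        · rfl
        · ring
      have harg1 : (2 * x - 0 - b) / (b - 0) ≠ -1 := by
        intro h; rw [div_eq_iff (by linarith : (b:ℝ) - 0 ≠ 0)] at h; nlinarith
      have harg2 : (2 * x - 0 - b) / (b - 0) ≠ 1 := by
        intro h; rw [div_eq_iff (by linarith : (b:ℝ) - 0 ≠ 0)] at h; nlinarith
      have h := (Real.hasDerivAt_arcsin harg1 harg2).comp x hL
      refine h.congr_deriv (Eq.symm ?_)
      have hin : 1 - ((2 * x - 0 - b) / (b - 0)) ^ 2 = (2 * S / (b - 0)) ^ 2 := by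
        rw [div_pow, div_pow, mul_pow, hS2]
        field_simp [hb.ne']
        ring
      rw [hin, Real.sqrt_sq (div_nonneg (by positivity) (by linarith))]
      field_simp [hb.ne']
    have h := h1.add (h2.const_mul (b / 2))
    refine h.congr_deriv (Eq.symm ?_)
    have hc : (0 + b - 2 * x) / (2 * S) + b / 2 * (1 / S) = (2 * b - 2 * x) / (2 * S) := by
      field_simp
      ring
    rw [hc, div_eq_div_iff hx0.ne' (by positivity)]
    linear_combination 2 * hS2
  have hftc := intervalIntegral.integral_eq_sub_of_hasDeriv_right_of_le hb.le hcont
    (fun x hx => (hderiv x hx).hasDerivWithinAt) (sqrt_int0 b hb)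
  have e1 : (2 * b - 0 - b) / (b - 0) = 1 := by
    rw [div_eq_one_iff_eq (by simp [hb.ne'] : (b:ℝ) - 0 ≠ 0)]; ring
  have e3 : (2 * 0 - 0 - b) / (b - 0) = -1 := by
    rw [div_eq_iff (by simp [hb.ne'] : (b:ℝ) - 0 ≠ 0)]; ring
  rw [hftc, e1, e3]
  simp only [sub_self, mul_zero, zero_mul, Real.sqrt_zero,
    Real.arcsin_one, Real.arcsin_neg_one]
  ring

lemma sqrt_intc (a b c : ℝ) (hab : a < b) (hac : 0 < a + c) :
    IntervalIntegrable (fun x : ℝ => Real.sqrt ((x - a) * (b - x)) / (x + c)) volume a b := by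
  apply ContinuousOn.intervalIntegrable
  rw [Set.uIcc_of_le hab.le]
  apply ContinuousOn.div (Real.continuous_sqrt.comp (by continuity)).continuousOn
    ((by continuity : Continuous fun y : ℝ => y + c).continuousOn)
  intro y hy
  have : 0 < y + c := by have := hy.1; linarith
  positivity

lemma I0_integrable (a b : ℝ) (ha : 0 ≤ a) (hab : a < b) :
    IntervalIntegrable (fun x : ℝ => Real.sqrt ((x - a) * (b - x)) / x) volume a b := by
  rcases ha.eq_or_lt with haz | hapos
  · rw [← haz]; exact sqrt_int0 b (by linarith)
  · have h := sqrt_intc a b 0 hab (by simpa using hapos)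
    simp only [add_zero] at h
    exact h

lemma I0_lemma (a b : ℝ) (ha : 0 ≤ a) (hab : a < b) :
    ∫ x in a..b, Real.sqrt ((x - a) * (b - x)) / x
      = Real.pi * ((a + b) / 2 - Real.sqrt (a * b)) := by
  rcases ha.eq_or_lt with haz | hapos
  · rw [← haz, key_integral0 b (by linarith)]
    simp [Real.sqrt_zero]
  · have h := key_integral a b 0 hab (by simpa using hapos)
    simp only [add_zero] at h
    exact h

noncomputable def mpden (r : ℝ) (x : ℝ) : ℝ :=
  Real.sqrt (max (x - (1 - Real.sqrt r) ^ 2) 0 * max ((1 + Real.sqrt r) ^ 2 - x) 0) /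
    (2 * Real.pi * r * x)

noncomputable def mpphi (γ r : ℝ) (x : ℝ) : ℝ := 1 / (1 + γ * x) * mpden r x

set_option maxHeartbeats 2000000 in
theorem mp_eta_transform (γ r : ℝ) (hγ : 0 < γ) (hr : 0 < r) :
    ∫ x, 1 / (1 + γ * x) ∂(MP r) = 1 - Fmp γ r / (4 * r * γ) := by
  have hπ := Real.pi_pos
  have hs : 0 < Real.sqrt r := Real.sqrt_pos.2 hr
  have hs2 : Real.sqrt r ^ 2 = r := Real.sq_sqrt hr.le
  obtain ⟨a, hadef⟩ : ∃ t : ℝ, t = (1 - Real.sqrt r) ^ 2 := ⟨_, rfl⟩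
  obtain ⟨b, hbdef⟩ : ∃ t : ℝ, t = (1 + Real.sqrt r) ^ 2 := ⟨_, rfl⟩
  have ha : 0 ≤ a := by rw [hadef]; exact sq_nonneg _
  have hab : a < b := by rw [hadef, hbdef]; nlinarith
  have hb0 : 0 < b := by rw [hbdef]; positivity
  have habsum : a + b = 2 + 2 * r := by rw [hadef, hbdef]; linear_combination 2 * hs2
  have habmul : a * b = (1 - r) ^ 2 := by
    rw [hadef, hbdef]; linear_combination (Real.sqrt r ^ 2 + r - 2) * hs2
  have hMP : MP r = ENNReal.ofReal (max (1 - 1 / r) 0) • Measure.dirac (0 : ℝ) +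
      volume.withDensity (fun x => ENNReal.ofReal (mpden r x)) := rfl
  have hρ0 : ∀ x, 0 ≤ mpden r x := by
    intro x
    rcases le_or_gt x 0 with hx | hx
    · unfold mpden
      rw [← hadef, max_eq_right (by linarith : x - a ≤ 0), zero_mul, Real.sqrt_zero, zero_div]
    · exact div_nonneg (Real.sqrt_nonneg _)
        (mul_pos (mul_pos (mul_pos two_pos hπ) hr) hx).le
  have hρm : Measurable (mpden r) := by
    unfold mpden
    exact (Real.continuous_sqrt.comp (by continuity)).measurable.div
      (measurable_id.const_mul (2 * Real.pi * r))
  have hgm : Measurable (fun x : ℝ => 1 / (1 + γ * x)) :=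
    measurable_const.div (measurable_const.add (measurable_id.const_mul γ))
  have hzero : ∀ x ∉ Set.Ioc a b, mpphi γ r x = 0 := by
    intro x hx
    rw [Set.mem_Ioc, not_and_or, not_lt, not_le] at hx
    unfold mpphi mpden
    rw [← hadef, ← hbdef]
    rcases hx with h | h
    · rw [max_eq_right (by linarith : x - a ≤ 0), zero_mul,
        Real.sqrt_zero, zero_div, mul_zero]
    · rw [max_eq_right (by linarith : b - x ≤ 0), mul_zero,
        Real.sqrt_zero, zero_div, mul_zero]
  have hρval : ∀ x ∈ Set.Icc a b, mpden r x
      = Real.sqrt ((x - a) * (b - x)) / (2 * Real.pi * r * x) := by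
    intro x hx
    obtain ⟨hx1, hx2⟩ := hx
    unfold mpden
    rw [← hadef, ← hbdef, max_eq_left (by linarith : (0:ℝ) ≤ x - a),
      max_eq_left (by linarith : (0:ℝ) ≤ b - x)]
  have hIoc : IntegrableOn (mpphi γ r) (Set.Ioc a b) volume := by
    have hbig : IntegrableOn
        (fun x : ℝ => Real.sqrt b / (2 * Real.pi * r) * x ^ (-(1:ℝ)/2)) (Set.Ioc a b) volume := by
      have h := (intervalIntegral.intervalIntegrable_rpow' (a := 0) (b := b)
        (r := -(1:ℝ)/2) (by norm_num)).const_mul (Real.sqrt b / (2 * Real.pi * r))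
      rw [intervalIntegrable_iff_integrableOn_Ioc_of_le hb0.le] at h
      exact h.mono_set (Set.Ioc_subset_Ioc_left ha)
    apply Integrable.mono' hbig ((hgm.mul hρm).aestronglyMeasurable.restrict)
    rw [ae_restrict_iff' measurableSet_Ioc]
    filter_upwards with x hx
    obtain ⟨hx1, hx2⟩ := hx
    have hx0 : 0 < x := lt_of_le_of_lt ha hx1
    have hg1 : (0:ℝ) < 1 + γ * x := by nlinarith
    have hsx : 0 < Real.sqrt x := Real.sqrt_pos.2 hx0
    have hden : (0:ℝ) < 2 * Real.pi * r * x :=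
      mul_pos (mul_pos (mul_pos two_pos hπ) hr) hx0
    have hρx := hρval x ⟨hx1.le, hx2⟩
    show ‖mpphi γ r x‖ ≤ Real.sqrt b / (2 * Real.pi * r) * x ^ (-(1:ℝ)/2)
    have hnorm : ‖mpphi γ r x‖ = 1 / (1 + γ * x) * mpden r x := by
      unfold mpphi
      rw [Real.norm_eq_abs, abs_of_nonneg (mul_nonneg (div_pos one_pos hg1).le (hρ0 x))]
    rw [hnorm, hρx]
    have hgle : 1 / (1 + γ * x) ≤ 1 := by rw [div_le_one hg1]; nlinarith
    have hQ : Real.sqrt ((x - a) * (b - x)) ≤ Real.sqrt x * Real.sqrt b := by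
      rw [← Real.sqrt_mul hx0.le]
      apply Real.sqrt_le_sqrt
      nlinarith
    have hrp : x ^ (-(1:ℝ)/2) = (Real.sqrt x)⁻¹ := by
      rw [show (-(1:ℝ)/2) = -(1/2:ℝ) by norm_num, Real.rpow_neg hx0.le, ← Real.sqrt_eq_rpow]
    rw [hrp]
    calc 1 / (1 + γ * x) * (Real.sqrt ((x - a) * (b - x)) / (2 * Real.pi * r * x))
        ≤ 1 * (Real.sqrt ((x - a) * (b - x)) / (2 * Real.pi * r * x)) :=
          mul_le_mul_of_nonneg_right hgle (div_nonneg (Real.sqrt_nonneg _) hden.le)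
      _ = Real.sqrt ((x - a) * (b - x)) / (2 * Real.pi * r * x) := one_mul _
      _ ≤ Real.sqrt x * Real.sqrt b / (2 * Real.pi * r * x) := by
          exact (div_le_div_iff_of_pos_right hden).2 hQ
      _ = Real.sqrt b / (2 * Real.pi * r) * (Real.sqrt x)⁻¹ := by
          field_simp
          linear_combination Real.mul_self_sqrt hx0.le
  have hsupp : Function.support (mpphi γ r) ⊆ Set.Ioc a b := Function.support_subset_iff'.2 hzero
  have hφint : Integrable (mpphi γ r) volume :=
    (integrableOn_iff_integrable_of_support_subset hsupp).1 hIoc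
  have hInt1 : Integrable (fun x : ℝ => 1 / (1 + γ * x))
      (ENNReal.ofReal (max (1 - 1 / r) 0) • Measure.dirac (0:ℝ)) := by
    apply Integrable.smul_measure _ ENNReal.ofReal_ne_top
    refine ⟨hgm.aestronglyMeasurable, ?_⟩
    simp [HasFiniteIntegral, lintegral_dirac]
  have hInt2 : Integrable (fun x : ℝ => 1 / (1 + γ * x))
      (volume.withDensity fun x => ENNReal.ofReal (mpden r x)) := by
    rw [integrable_withDensity_iff hρm.ennreal_ofReal
      (Filter.Eventually.of_forall fun x => ENNReal.ofReal_lt_top)]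
    apply hφint.congr
    filter_upwards with x
    unfold mpphi
    rw [ENNReal.toReal_ofReal (hρ0 x)]
  rw [hMP, integral_add_measure hInt1 hInt2, integral_smul_measure, integral_dirac,
    ENNReal.toReal_ofReal (le_max_right _ _)]
  have hρρ : (fun x : ℝ => ENNReal.ofReal (mpden r x))
      = fun x => ((Real.toNNReal (mpden r x) : ℝ≥0∞)) := rfl
  rw [hρρ, integral_withDensity_eq_integral_smul hρm.real_toNNReal]
  have hsm : (fun x : ℝ => Real.toNNReal (mpden r x) • (1 / (1 + γ * x))) = mpphi γ r := by
    funext x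
    rw [NNReal.smul_def, Real.coe_toNNReal _ (hρ0 x)]
    unfold mpphi
    rw [smul_eq_mul]
    ring
  rw [hsm, ← setIntegral_eq_integral_of_forall_compl_eq_zero hzero,
    ← intervalIntegral.integral_of_le hab.le]
  have hxgpos : (0:ℝ) < 1/γ := one_div_pos.2 hγ
  have hIcongr : ∫ x in a..b, mpphi γ r x
      = ∫ x in a..b, 1 / (2 * Real.pi * r) *
          (Real.sqrt ((x - a) * (b - x)) / x - Real.sqrt ((x - a) * (b - x)) / (x + 1/γ)) := by
    apply intervalIntegral.integral_congr
    intro x hx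
    rw [Set.uIcc_of_le hab.le] at hx
    obtain ⟨hx1, hx2⟩ := hx
    unfold mpphi
    rw [hρval x ⟨hx1, hx2⟩]
    rcases hx1.eq_or_lt with heq | hlt
    · rw [← heq]
      simp [sub_self]
    · have hx0 : 0 < x := lt_of_le_of_lt ha hlt
      have hg1 : (0:ℝ) < 1 + γ * x := by nlinarith
      have hxg : (0:ℝ) < x + 1/γ := by linarith
      field_simp
      ring
  rw [hIcongr, intervalIntegral.integral_const_mul,
    intervalIntegral.integral_sub (I0_integrable a b ha hab)
      (sqrt_intc a b (1/γ) hab (by linarith)),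
    I0_lemma a b ha hab, key_integral a b (1/γ) hab (by linarith)]
  have hga : (0:ℝ) ≤ γ * a + 1 := by nlinarith
  have hgb : (0:ℝ) ≤ γ * b + 1 := by nlinarith
  have hFmp : Fmp γ r = (γ * b + 1) + (γ * a + 1)
      - 2 * Real.sqrt ((γ * b + 1) * (γ * a + 1)) := by
    unfold Fmp
    rw [← hadef, ← hbdef, sub_sq, Real.sq_sqrt hgb, Real.sq_sqrt hga, mul_assoc,
      ← Real.sqrt_mul hgb]
    ring
  have hk1 : Real.sqrt ((a + 1/γ) * (b + 1/γ)) = Real.sqrt ((γ * b + 1) * (γ * a + 1)) / γ := by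
    rw [show (a + 1/γ) * (b + 1/γ) = ((γ * b + 1) * (γ * a + 1)) / γ^2 by field_simp,
      Real.sqrt_div (mul_nonneg hgb hga), Real.sqrt_sq hγ.le]
  have habs : Real.sqrt (a * b) = |1 - r| := by rw [habmul, Real.sqrt_sq_eq_abs]
  rw [habs, hk1, hFmp]
  rw [show b = 2 + 2 * r - a from by linarith]
  rcases le_total r 1 with hcase | hcase
  · have h1r : 1 - 1/r ≤ 0 := by
      have : (1:ℝ) ≤ 1/r := by rw [le_div_iff₀ hr]; linarith
      linarith
    rw [abs_of_nonneg (by linarith), max_eq_right h1r, smul_eq_mul]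
    field_simp
    ring
  · have h1r : 0 ≤ 1 - 1/r := by
      have : 1/r ≤ (1:ℝ) := by rw [div_le_one hr]; linarith
      linarith
    rw [abs_of_nonpos (by linarith), max_eq_left h1r, smul_eq_mul]
    field_simp
    ring
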